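/- arXiv:1802.09190 — 4 statements merged into one kernel-verified Lean document; each statement's English description precedes it below -/
import Mathlib

section
/- Let n ∈ ℕ and let f : ℝ → ℝ be infinitely differentiable. Define the operator T on smooth functions by (Tg)(x) = g'(x) − 2x·g(x). Then for all x ∈ ℝ, (Tⁿf)(x) = Σ_{k=0}^{n} (−1)^{n−k} · binom(n,k) · H_{n−k}(x) · f^{(k)}(x), where f^{(k)} denotes the k-th derivative of f. -/
open Finset

/-- Physicists' Hermite polynomial `H_n(x)`. -/
noncomputable def hermiteH (n : ℕ) (x : ℝ) : ℝ :=
  (n.factorial : ℝ) * ∑ m ∈ Finset.range (n / 2 + 1),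
    (-1 : ℝ) ^ m * (2 * x) ^ (n - 2 * m) / ((m.factorial : ℝ) * ((n - 2 * m).factorial : ℝ))

/-- The operator `(Tg)(x) = g'(x) - 2x g(x)`. -/
noncomputable def hermiteOpT (g : ℝ → ℝ) : ℝ → ℝ := fun x => deriv g x - 2 * x * g x

noncomputable def hermiteD (n : ℕ) (x : ℝ) : ℝ :=
  (n.factorial : ℝ) * ∑ m ∈ Finset.range (n / 2 + 1),
    ((-1 : ℝ) ^ m * (((n - 2*m : ℕ) : ℝ) * (2 * x) ^ (n - 2*m - 1) * 2)) /
      ((m.factorial : ℝ) * ((n - 2 * m).factorial : ℝ))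

lemma term_id (i e : ℕ) (y : ℝ) :
    ((e + 2*i + 3).factorial : ℝ) * ((-1)^(i+1) * y^(e+1) / (((i+1).factorial : ℝ) * ((e+1).factorial : ℝ)))
      + ((e + 2*i + 2).factorial : ℝ) *
        (((-1:ℝ)^i * ((((e+2 : ℕ)) : ℝ) * y^(e+2-1) * 2)) / ((i.factorial : ℝ) * ((e+2).factorial : ℝ)))
    = y * (((e + 2*i + 2).factorial : ℝ) * ((-1)^(i+1) * y^e / (((i+1).factorial : ℝ) * (e.factorial : ℝ)))) := by
  have h1 : ((e + 2*i + 3).factorial : ℝ) = (e + 2*i + 3) * (e + 2*i + 2).factorial := by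
    rw [show e + 2*i + 3 = (e + 2*i + 2) + 1 by ring, Nat.factorial_succ]; push_cast; ring
  have h2 : ((e+1).factorial : ℝ) = (e+1) * e.factorial := by rw [Nat.factorial_succ]; push_cast; ring
  have h3 : ((e+2).factorial : ℝ) = (e+2) * ((e+1) * e.factorial) := by
    rw [Nat.factorial_succ, Nat.factorial_succ]; push_cast; ring
  have h4 : ((i+1).factorial : ℝ) = (i+1) * i.factorial := by rw [Nat.factorial_succ]; push_cast; ring
  have pe : (e.factorial : ℝ) ≠ 0 := Nat.cast_ne_zero.mpr e.factorial_ne_zero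
  have pi : (i.factorial : ℝ) ≠ 0 := Nat.cast_ne_zero.mpr i.factorial_ne_zero
  rw [h1, h2, h3, h4]
  push_cast
  field_simp
  ring

lemma term_id' (n i : ℕ) (h : 2*(i+1) ≤ n) (y : ℝ) :
    ((n+1).factorial : ℝ) * ((-1:ℝ)^(i+1) * y^(n+1-2*(i+1)) / (((i+1).factorial : ℝ) * ((n+1-2*(i+1)).factorial : ℝ)))
      + (n.factorial : ℝ) * (((-1:ℝ)^i * (((n - 2*i : ℕ) : ℝ) * y^(n-2*i-1) * 2)) / ((i.factorial : ℝ) * (((n-2*i).factorial : ℝ))))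
    = y * ((n.factorial : ℝ) * ((-1:ℝ)^(i+1) * y^(n-2*(i+1)) / (((i+1).factorial : ℝ) * ((n-2*(i+1)).factorial : ℝ)))) := by
  obtain ⟨e, rfl⟩ : ∃ e, n = e + 2*i + 2 := ⟨n - 2*(i+1), by omega⟩
  have h1 : e + 2*i + 2 + 1 - 2*(i+1) = e + 1 := by omega
  have h2 : e + 2*i + 2 - 2*i = e + 2 := by omega
  have h4 : e + 2*i + 2 - 2*(i+1) = e := by omega
  have h5 : e + 2*i + 2 + 1 = e + 2*i + 3 := by omega
  rw [h1, h2, h4, h5]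
  exact term_id i e y

lemma sum_mul_shape (p : ℕ) (A : ℕ → ℝ) (c y : ℝ) :
    y * (c * ∑ i ∈ range p, A (i+1)) = ∑ i ∈ range p, y * (c * A (i+1)) := by
  rw [Finset.mul_sum, Finset.mul_sum]

lemma sum_glue (p : ℕ) (L A B : ℕ → ℝ) (c c' y : ℝ)
    (hterm : ∀ i < p, c' * L (i+1) + c * B i = y * (c * A (i+1)))
    (hBp : B p = 0) (h0 : c' * L 0 = y * (c * A 0)) :
    c' * ∑ j ∈ range (p+1), L j + c * ∑ m ∈ range (p+1), B m
      = y * (c * ∑ m ∈ range (p+1), A m) := by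
  rw [Finset.sum_range_succ' L p, Finset.sum_range_succ B p, Finset.sum_range_succ' A p, hBp]
  have key : c' * ∑ i ∈ range p, L (i+1) + c * ∑ i ∈ range p, B i
      = y * (c * ∑ i ∈ range p, A (i+1)) := by
    rw [Finset.mul_sum (range p) _ c', Finset.mul_sum (range p) _ c, ← Finset.sum_add_distrib, sum_mul_shape]
    exact Finset.sum_congr rfl (fun i hi => hterm i (mem_range.mp hi))
  linear_combination key + h0

lemma sum_glue_odd (p : ℕ) (L A B : ℕ → ℝ) (c c' y : ℝ)
    (hterm : ∀ i < p, c' * L (i+1) + c * B i = y * (c * A (i+1)))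
    (hlast : c' * L (p+1) + c * B p = 0)
    (h0 : c' * L 0 = y * (c * A 0)) :
    c' * ∑ j ∈ range (p+2), L j + c * ∑ m ∈ range (p+1), B m
      = y * (c * ∑ m ∈ range (p+1), A m) := by
  rw [Finset.sum_range_succ' L (p+1), Finset.sum_range_succ (fun i => L (i+1)) p,
    Finset.sum_range_succ B p, Finset.sum_range_succ' A p]
  have key : c' * ∑ i ∈ range p, L (i+1) + c * ∑ i ∈ range p, B i
      = y * (c * ∑ i ∈ range p, A (i+1)) := by
    rw [Finset.mul_sum (range p) _ c', Finset.mul_sum (range p) _ c, ← Finset.sum_add_distrib, sum_mul_shape]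
    exact Finset.sum_congr rfl (fun i hi => hterm i (mem_range.mp hi))
  linear_combination key + h0 + hlast

lemma hermiteH_rec (n : ℕ) (x : ℝ) :
    hermiteH (n+1) x + hermiteD n x = 2 * x * hermiteH n x := by
  unfold hermiteH hermiteD
  rcases Nat.even_or_odd n with he | ho
  · obtain ⟨q, hq⟩ := he
    obtain ⟨p, rfl⟩ : ∃ p, n = 2*p := ⟨q, by omega⟩
    rw [show (2*p+1)/2 = p from by omega, show 2*p/2 = p from by omega]
    apply sum_glue p
    · intro i hi
      exact term_id' (2*p) i (by omega) (2*x)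
    · norm_num
    · simp [Nat.factorial]
      rw [pow_succ]
      field_simp
  · obtain ⟨q, hq⟩ := ho
    obtain ⟨p, rfl⟩ : ∃ p, n = 2*p+1 := ⟨q, by omega⟩
    rw [show (2*p+1+1)/2 = p+1 from by omega, show (2*p+1)/2 = p from by omega]
    apply sum_glue_odd p
    · intro i hi
      exact term_id' (2*p+1) i (by omega) (2*x)
    · rw [show 2*p+1+1-2*(p+1) = 0 from by omega, show 2*p+1-2*p = 1 from by omega]
      have h1 : ((2*p+1+1).factorial : ℝ) = (2*p+2) * (2*p+1).factorial := by
        rw [show 2*p+1+1 = (2*p+1)+1 from rfl, Nat.factorial_succ]; push_cast; ring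
      have h4 : ((p+1).factorial : ℝ) = (p+1) * p.factorial := by rw [Nat.factorial_succ]; push_cast; ring
      have pp : (p.factorial : ℝ) ≠ 0 := Nat.cast_ne_zero.mpr p.factorial_ne_zero
      rw [h1, h4]
      simp [Nat.factorial]
      rw [pow_succ]
      field_simp
      ring
    · simp [Nat.factorial]
      rw [pow_succ]
      field_simp

lemma hermiteH_zero (x : ℝ) : hermiteH 0 x = 1 := by
  simp [hermiteH]

lemma hasDerivAt_hermiteH (n : ℕ) (x : ℝ) :
    HasDerivAt (hermiteH n) (hermiteD n x) x := by
  unfold hermiteH hermiteD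
  apply HasDerivAt.const_mul
  apply HasDerivAt.fun_sum
  intro m _
  have h2 : HasDerivAt (fun x : ℝ => 2 * x) 2 x := by simpa using (hasDerivAt_id x).const_mul 2
  exact ((h2.pow _).const_mul _).div_const _

lemma hermiteD_eq (n : ℕ) (x : ℝ) :
    hermiteD n x = 2 * x * hermiteH n x - hermiteH (n+1) x := by
  linarith [hermiteH_rec n x]

lemma pascal_glue (n : ℕ) (P Y G : ℕ → ℝ)
    (hG : ∀ i ≤ n, G (i+1) = P (i+1) + Y i)
    (hPlast : P (n+1) = 0)
    (hP0 : P 0 = G 0) :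
    ∑ k ∈ range (n+1), P k + ∑ k ∈ range (n+1), Y k = ∑ k ∈ range (n+2), G k := by
  rw [Finset.sum_range_succ' G (n+1), Finset.sum_range_succ' P n]
  have h1 : ∑ i ∈ range (n+1), G (i+1) = ∑ i ∈ range (n+1), (P (i+1) + Y i) :=
    Finset.sum_congr rfl fun i hi => hG i (Nat.lt_succ_iff.mp (mem_range.mp hi))
  rw [h1, Finset.sum_add_distrib, Finset.sum_range_succ (fun i => P (i+1)) n, hPlast, hP0]
  ring


theorem burchnall_hermite_operational (n : ℕ) (f : ℝ → ℝ) (hf : ContDiff ℝ (⊤ : ℕ∞) f) (x : ℝ) :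
    (hermiteOpT^[n] f) x =
      ∑ k ∈ Finset.range (n + 1),
        (-1 : ℝ) ^ (n - k) * (n.choose k : ℝ) * hermiteH (n - k) x * iteratedDeriv k f x := by
  induction n generalizing x with
  | zero => simp [hermiteH_zero]
  | succ n ih =>
    have hTn : hermiteOpT^[n] f = fun y => ∑ k ∈ Finset.range (n+1),
        (-1:ℝ)^(n-k) * (n.choose k : ℝ) * hermiteH (n-k) y * iteratedDeriv k f y :=
      funext fun y => ih y
    rw [Function.iterate_succ_apply']
    show deriv (hermiteOpT^[n] f) x - 2 * x * (hermiteOpT^[n] f) x = _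
    rw [hTn]
    have hd : HasDerivAt (fun y => ∑ k ∈ Finset.range (n+1),
        (-1:ℝ)^(n-k) * (n.choose k : ℝ) * hermiteH (n-k) y * iteratedDeriv k f y)
        (∑ k ∈ Finset.range (n+1), (-1:ℝ)^(n-k) * (n.choose k : ℝ) *
          (hermiteD (n-k) x * iteratedDeriv k f x + hermiteH (n-k) x * iteratedDeriv (k+1) f x)) x := by
      apply HasDerivAt.fun_sum
      intro k _
      have h1 := hasDerivAt_hermiteH (n-k) x
      have h2 : HasDerivAt (iteratedDeriv k f) (iteratedDeriv (k+1) f x) x := by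
        have hdiff : Differentiable ℝ (iteratedDeriv k f) :=
          hf.differentiable_iteratedDeriv k (WithTop.coe_lt_coe.mpr (ENat.coe_lt_top k))
        simpa [iteratedDeriv_succ] using (hdiff x).hasDerivAt
      have h3 := (h1.fun_mul h2).const_mul ((-1:ℝ)^(n-k) * (n.choose k : ℝ))
      have heq : (fun y => (-1:ℝ)^(n-k) * (n.choose k : ℝ) * (hermiteH (n-k) y * iteratedDeriv k f y))
          = fun y => (-1:ℝ)^(n-k) * (n.choose k : ℝ) * hermiteH (n-k) y * iteratedDeriv k f y := by
        funext y; ring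
      rw [heq] at h3
      exact h3
    rw [hd.deriv]
    have step1 : (∑ k ∈ Finset.range (n+1), (-1:ℝ)^(n-k) * (n.choose k:ℝ) *
          (hermiteD (n-k) x * iteratedDeriv k f x + hermiteH (n-k) x * iteratedDeriv (k+1) f x))
        - 2*x*(∑ k ∈ Finset.range (n+1), (-1:ℝ)^(n-k) * (n.choose k:ℝ) * hermiteH (n-k) x * iteratedDeriv k f x)
        = ∑ k ∈ Finset.range (n+1), (-((-1:ℝ)^(n-k) * (n.choose k:ℝ) * hermiteH (n+1-k) x * iteratedDeriv k f x)
            + (-1:ℝ)^(n-k) * (n.choose k:ℝ) * hermiteH (n-k) x * iteratedDeriv (k+1) f x) := by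
      rw [Finset.mul_sum, ← Finset.sum_sub_distrib]
      apply Finset.sum_congr rfl
      intro k hk
      have hk' : k ≤ n := Nat.lt_succ_iff.mp (mem_range.mp hk)
      rw [hermiteD_eq, show (n-k)+1 = n+1-k from by omega]
      ring
    rw [step1, Finset.sum_add_distrib]
    apply pascal_glue
    · intro i hi
      rw [show n+1-(i+1) = n-i from by omega, Nat.choose_succ_succ]
      push_cast
      rcases eq_or_lt_of_le hi with rfl | hlt
      · simp [Nat.choose_succ_self]
      · rw [show n-i = (n-(i+1))+1 from by omega, pow_succ]
        ring
    · simp [Nat.choose_succ_self]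
    · simp only [Nat.sub_zero, Nat.choose_zero_right, Nat.cast_one, pow_succ]
      ring
end

section
/- For all m, n ∈ ℕ, all ν ∈ ℝ, and all x ∈ ℝ, ((m+1)_n / n!) · L_{m+n}^{(ν)}(x) = Σ_{k=0}^{min(n,m)} ((−x)^k / k!) · L_{n−k}^{(ν+k)}(x) · L_{m−k}^{(ν+n+k)}(x). -/
open Finset

/-- Pochhammer symbol `(a)_j = a(a+1)⋯(a+j-1)`. -/
noncomputable def poch (a : ℝ) (j : ℕ) : ℝ := ∏ i ∈ Finset.range j, (a + i)

/-- Generalized Laguerre polynomial `L_n^{(ν)}(x)`. -/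
noncomputable def laguerreL (n : ℕ) (ν : ℝ) (x : ℝ) : ℝ :=
  ∑ k ∈ Finset.range (n + 1),
    (-1 : ℝ) ^ k * poch (ν + k + 1) (n - k) / (((n - k).factorial : ℝ) * (k.factorial : ℝ)) * x ^ k

/-!
Write `L_r^{(μ)}(x) = ∑_a binom(μ + r, r - a) (-x)^a / a!`. Since `binom(z, r - a)` is the
`a`-th forward difference of `z ↦ binom(z, r)`, each Laguerre polynomial in the identity is the
exponential generating polynomial `∑_a Δ^a φ(y) t^a / a!`, at `t = -x`, of the forward
differences of some `φ = binom(· + c, r)`. As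
`binom(z, n) binom(z + m, m) = binom(m + n, n) binom(z + m, m + n)`, the left-hand side comes
from the product `f g` of `f = binom(·, n)` and `g = binom(· + m, m)`.

The Leibniz rule `Δ^j (f g)(y) = ∑_i binom(j, i) Δ^i f(y) Δ^(j-i) g(y + i)`, followed by
Newton's expansion of `Δ^(j-i) g(y + i)`, gives the trinomial formula
`Δ^j (f g) = ∑_{k+a+b=j} j!/(k! a! b!) Δ^(k+a) f Δ^(k+b) g`. Multiplied by `t^j / j!` and
summed over `j`, it becomes `∑_k t^k/k! (∑_a t^a/a! Δ^(k+a) f) (∑_b t^b/b! Δ^(k+b) g)`, the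
right-hand side.
-/

open Polynomial fwdDiff

section FwdDiff

variable {M R : Type*} [AddCommMonoid M] [CommRing R] (h : M)

theorem fwdDiff_iter_mul_apply (f g : M → R) (j : ℕ) (y : M) :
    (Δ_[h])^[j] (f * g) y =
      ∑ i ∈ range (j + 1),
        (j.choose i : R) * ((Δ_[h])^[i] f y * (Δ_[h])^[j - i] g (y + i • h)) := by
  induction j generalizing f g with
  | zero => simp
  | succ j ih =>
    have hmul : Δ_[h] (f * g) = Δ_[h] f * (fun z => g (z + h)) + f * Δ_[h] g := by
      ext z; simp only [fwdDiff, Pi.add_apply, Pi.mul_apply]; ring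
    rw [Function.iterate_succ_apply, hmul, fwdDiff_iter_add, Pi.add_apply, ih, ih,
      sum_choose_succ_mul (fun i r => (Δ_[h])^[i] f y * (Δ_[h])^[r] g (y + i • h)), add_comm]
    congr 1 <;> refine sum_congr rfl fun i hi => ?_
    · rw [← Function.iterate_succ_apply, Nat.succ_eq_add_one,
        Nat.sub_add_comm (Nat.lt_succ_iff.mp (mem_range.mp hi))]
    · rw [fwdDiff_iter_comp_add, succ_nsmul, add_assoc, Function.iterate_succ_apply]

theorem fwdDiff_iter_mul_apply_eq_sum_sum (f g : M → R) (j : ℕ) (y : M) :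
    (Δ_[h])^[j] (f * g) y =
      ∑ k ∈ range (j + 1), ∑ a ∈ range (j - k + 1),
        (j.choose k * (j - k).choose a : R) * ((Δ_[h])^[k + a] f y * (Δ_[h])^[j - a] g y) := by
  have newton (i : ℕ) : (Δ_[h])^[j - i] g (y + i • h) =
      ∑ d ∈ range (i + 1), (i.choose d : R) * (Δ_[h])^[d + (j - i)] g y := by
    simp only [shift_eq_sum_fwdDiff_iter, nsmul_eq_mul, Function.iterate_add_apply]
  rw [fwdDiff_iter_mul_apply]
  refine (sum_congr rfl fun i hi => ?_).trans <| (sum_range_diag_flip (j + 1) _).trans <|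
    sum_congr rfl fun k hk => by rw [Nat.sub_add_comm (Nat.lt_succ_iff.mp (mem_range.mp hk))]
  have hij : i ≤ j := Nat.lt_succ_iff.mp (mem_range.mp hi)
  rw [newton, mul_sum, mul_sum]
  refine sum_congr rfl fun d hd => ?_
  have hdi : d ≤ i := Nat.lt_succ_iff.mp (mem_range.mp hd)
  rw [Nat.add_sub_cancel' hdi, ← Nat.cast_mul, ← Nat.choose_mul hdi,
    show d + (j - i) = j - (i - d) by omega]
  push_cast
  ring

end FwdDiff

section RingChoose

variable {R : Type*} [CommRing R] [BinomialRing R]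

theorem fwdDiff_iter_ringChoose (n p : ℕ) :
    (Δ_[1])^[p] (fun r : R => Ring.choose r n) =
      fun r => if p ≤ n then Ring.choose r (n - p) else 0 := by
  induction p with
  | zero => simp
  | succ p ih =>
    rw [Function.iterate_succ_apply', ih]
    ext r
    obtain hpn | rfl | hnp := lt_trichotomy p n
    · obtain ⟨q, hq⟩ : ∃ q, n - p = q + 1 := ⟨n - p - 1, by omega⟩
      simp [fwdDiff, hpn.le, hpn, hq, Ring.choose_succ_succ, show n - (p + 1) = q by omega]
    · simp [fwdDiff]
    · simp [fwdDiff, hnp.not_ge, show ¬ p + 1 ≤ n by omega]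

theorem ringChoose_mul_ringChoose_add (m n : ℕ) (r : R) :
    Ring.choose r n * Ring.choose (r + m) m = (m + n).choose n * Ring.choose (r + m) (m + n) := by
  rw [mul_comm, ← Ring.choose_add_smul_choose, nsmul_eq_mul, add_comm n m, Nat.choose_symm_add]

end RingChoose

theorem poch_eq_ascPochhammer_eval (a : ℝ) (j : ℕ) :
    poch a j = (ascPochhammer ℝ j).eval a := by
  induction j with
  | zero => simp [poch]
  | succ j ih => rw [poch, prod_range_succ, ← poch, ih, ascPochhammer_succ_eval]

theorem poch_div_factorial (a : ℝ) (j : ℕ) : poch a j / j.factorial = Ring.multichoose a j := by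
  rw [div_eq_iff (by positivity), poch_eq_ascPochhammer_eval, ← ascPochhammer_smeval_eq_eval,
    ← Ring.factorial_nsmul_multichoose_eq_ascPochhammer, nsmul_eq_mul, mul_comm]

theorem poch_natCast_add_one_div_factorial (m n : ℕ) :
    poch ((m : ℝ) + 1) n / n.factorial = (m + n).choose n := by
  rw [poch_div_factorial, Ring.multichoose_eq, add_right_comm, add_sub_cancel_right,
    ← Nat.cast_add, Ring.choose_natCast]

section EGF

variable {K : Type*} [Field K]

noncomputable def egf (N : ℕ) (u : ℕ → K) : K[X] :=
  ∑ p ∈ range N, C (u p / p.factorial) * X ^ p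

theorem eval_egf (N : ℕ) (u : ℕ → K) (t : K) :
    (egf N u).eval t = ∑ p ∈ range N, u p / p.factorial * t ^ p := by
  simp [egf, eval_finsetSum]

theorem egf_const_mul (N : ℕ) (c : K) (u : ℕ → K) :
    egf N (fun p => c * u p) = C c * egf N u := by
  simp only [egf, mul_sum, C_mul, mul_div_assoc, mul_assoc]

theorem coeff_egf {N : ℕ} {u : ℕ → K} (hu : ∀ p, N ≤ p → u p = 0) (p : ℕ) :
    (egf N u).coeff p = u p / p.factorial := by
  by_cases hp : p < N
  · simp [egf, finsetSum_coeff, coeff_X_pow, hp]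
  · simp [egf, finsetSum_coeff, coeff_X_pow, hp, hu p (not_lt.mp hp)]

theorem coeff_X_pow_mul_egf_mul_egf {m n k : ℕ} {u v : ℕ → K}
    (hu : ∀ p, n < p → u p = 0) (hv : ∀ q, m < q → v q = 0) (j : ℕ) :
    (X ^ k * (egf (n - k + 1) (fun a => u (k + a)) *
      egf (m - k + 1) (fun b => v (k + b)))).coeff j =
      if k ≤ j then ∑ a ∈ range (j - k + 1),
        u (k + a) * v (j - a) / (a.factorial * (j - k - a).factorial) else 0 := by
  rw [coeff_X_pow_mul']
  split_ifs with hkj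
  · rw [coeff_mul, Nat.sum_antidiagonal_eq_sum_range_succ_mk]
    refine sum_congr rfl fun a ha => ?_
    rw [coeff_egf (fun p hp => hu _ (by omega)), coeff_egf (fun p hp => hv _ (by omega)),
      show k + (j - k - a) = j - a by grind, div_mul_div_comm]
  · rfl

variable [CharZero K]

theorem choose_mul_choose_div_factorial {j k a : ℕ} (hk : k ≤ j) (ha : a ≤ j - k) :
    (j.choose k * (j - k).choose a : K) / j.factorial =
      (k.factorial : K)⁻¹ * (a.factorial * (j - k - a).factorial : K)⁻¹ := by
  have hfac (i : ℕ) : (i.factorial : K) ≠ 0 := Nat.cast_ne_zero.mpr i.factorial_ne_zero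
  rw [div_eq_iff (hfac j), ← Nat.choose_mul_factorial_mul_factorial hk,
    ← Nat.choose_mul_factorial_mul_factorial ha]
  push_cast
  field_simp [hfac]

theorem egf_trinomial {m n : ℕ} {u v : ℕ → K}
    (hu : ∀ p, n < p → u p = 0) (hv : ∀ q, m < q → v q = 0) :
    egf (m + n + 1) (fun j => ∑ k ∈ range (j + 1), ∑ a ∈ range (j - k + 1),
        (j.choose k * (j - k).choose a : K) * (u (k + a) * v (j - a))) =
      ∑ k ∈ range (min n m + 1), C (k.factorial : K)⁻¹ *
        (X ^ k * (egf (n - k + 1) (fun a => u (k + a)) *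
          egf (m - k + 1) (fun b => v (k + b)))) := by
  have hsupp (j k a : ℕ) (hkj : k ≤ j) (ha : a ∈ range (j - k + 1))
      (h : u (k + a) * v (j - a) ≠ 0) : k ≤ min n m ∧ j ≤ m + n := by
    have h1 : k + a ≤ n := not_lt.mp fun h' => h (by rw [hu _ h', zero_mul])
    have h2 : j - a ≤ m := not_lt.mp fun h' => h (by rw [hv _ h', mul_zero])
    have := mem_range.mp ha
    omega
  set S : ℕ → ℕ → K := fun j k => ∑ a ∈ range (j - k + 1),
    u (k + a) * v (j - a) / (a.factorial * (j - k - a).factorial)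
  have hS (j k : ℕ) (hkj : k ≤ j) (h : S j k ≠ 0) : k ≤ min n m ∧ j ≤ m + n := by
    obtain ⟨a, ha, hne⟩ := exists_ne_zero_of_sum_ne_zero h
    exact hsupp j k a hkj ha (div_ne_zero_iff.mp hne).1
  have hcoeff (j : ℕ) : (∑ k ∈ range (j + 1), ∑ a ∈ range (j - k + 1),
      (j.choose k * (j - k).choose a : K) * (u (k + a) * v (j - a))) / j.factorial =
        ∑ k ∈ range (j + 1), (k.factorial : K)⁻¹ * S j k := by
    simp only [S, sum_div, mul_sum]
    refine sum_congr rfl fun k hk => sum_congr rfl fun a ha => ?_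
    rw [mul_div_right_comm, choose_mul_choose_div_factorial
      (Nat.lt_succ_iff.mp (mem_range.mp hk)) (Nat.lt_succ_iff.mp (mem_range.mp ha)), div_eq_mul_inv]
    ring
  have hvanish (p : ℕ) (hp : m + n + 1 ≤ p) :
      ∑ k ∈ range (p + 1), ∑ a ∈ range (p - k + 1),
        (p.choose k * (p - k).choose a : K) * (u (k + a) * v (p - a)) = 0 := by
    refine sum_eq_zero fun k hk => sum_eq_zero fun a ha => ?_
    by_contra hne
    have := hsupp p k a (Nat.lt_succ_iff.mp (mem_range.mp hk)) ha (right_ne_zero_of_mul hne)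
    omega
  ext j
  rw [coeff_egf hvanish, hcoeff, finsetSum_coeff]
  simp only [coeff_C_mul, coeff_X_pow_mul_egf_mul_egf hu hv, mul_ite, mul_zero, ← sum_filter]
  rw [← sum_filter_of_ne fun k hk hne =>
    (hS j k (Nat.lt_succ_iff.mp (mem_range.mp hk)) (right_ne_zero_of_mul hne)).1]
  congr 1
  ext k
  simp only [mem_filter, mem_range]
  omega

end EGF

theorem egf_fwdDiff_iter_mul {M K : Type*} [AddCommMonoid M] [Field K] [CharZero K] (h : M)
    {m n : ℕ} (f g : M → K) (y : M)
    (hf : ∀ p, n < p → (Δ_[h])^[p] f y = 0) (hg : ∀ q, m < q → (Δ_[h])^[q] g y = 0) :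
    egf (m + n + 1) (fun j => (Δ_[h])^[j] (f * g) y) =
      ∑ k ∈ range (min n m + 1), C (k.factorial : K)⁻¹ *
        (X ^ k * (egf (n - k + 1) (fun a => (Δ_[h])^[k + a] f y) *
          egf (m - k + 1) (fun b => (Δ_[h])^[k + b] g y))) := by
  refine (congrArg (egf _) <| funext fun j => fwdDiff_iter_mul_apply_eq_sum_sum h f g j y).trans ?_
  exact egf_trinomial (u := fun p => (Δ_[h])^[p] f y) (v := fun q => (Δ_[h])^[q] g y) hf hg

theorem laguerreL_eq_eval_egf_fwdDiff {r k : ℕ} (hk : k ≤ r) (μ x : ℝ) :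
    laguerreL (r - k) (μ + k) x =
      (egf (r - k + 1) fun a =>
        (Δ_[1])^[k + a] (fun z => Ring.choose z r) (μ + r)).eval (-x) := by
  rw [eval_egf, laguerreL]
  refine sum_congr rfl fun a ha => ?_
  have ha : a ≤ r - k := Nat.lt_succ_iff.mp (mem_range.mp ha)
  have hμ : μ + r - ((r - (k + a) : ℕ) : ℝ) + 1 = μ + k + a + 1 := by
    rw [Nat.cast_sub (by omega)]
    push_cast
    ring
  simp only [fwdDiff_iter_ringChoose, if_pos (show k + a ≤ r by omega)]
  rw [Ring.choose, hμ, ← poch_div_factorial,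
    show r - (k + a) = r - k - a by omega, neg_pow x]
  field_simp

theorem burchnall_laguerre_expansion (m n : ℕ) (ν : ℝ) (x : ℝ) :
    poch ((m : ℝ) + 1) n / (n.factorial : ℝ) * laguerreL (m + n) ν x =
      ∑ k ∈ Finset.range (min n m + 1),
        (-x) ^ k / (k.factorial : ℝ) * laguerreL (n - k) (ν + k) x *
          laguerreL (m - k) (ν + n + k) x := by
  set φ : ℕ → ℝ → ℝ := fun r z => Ring.choose z r
  have hφ (r p : ℕ) (hp : r < p) (z : ℝ) : (Δ_[1])^[p] (φ r) z = 0 := by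
    simp [φ, fwdDiff_iter_ringChoose, not_le.mpr hp]
  have hprod : φ n * (fun z => φ m (z + m)) =
      ((m + n).choose n : ℝ) • fun z => φ (m + n) (z + m) := by
    ext z
    exact ringChoose_mul_ringChoose_add m n z
  have hburchnall := congrArg (eval (-x)) <|
    egf_fwdDiff_iter_mul 1 (φ n) (fun z => φ m (z + m)) (ν + n)
      (fun p hp => hφ n p hp _) (fun q hq => by rw [fwdDiff_iter_comp_add]; exact hφ m q hq _)
  simp only [hprod, fwdDiff_iter_const_smul, Pi.smul_apply, smul_eq_mul, egf_const_mul,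
    fwdDiff_iter_comp_add, eval_mul, eval_C, eval_finsetSum, eval_pow, eval_X] at hburchnall
  have hL : laguerreL (m + n) ν x =
      (egf (m + n + 1) fun p => (Δ_[1])^[p] (φ (m + n)) (ν + n + m)).eval (-x) := by
    simpa [add_assoc, add_comm (m : ℝ)] using
      laguerreL_eq_eval_egf_fwdDiff (Nat.zero_le (m + n)) ν x
  rw [poch_natCast_add_one_div_factorial, hL, hburchnall]
  refine sum_congr rfl fun k hk => ?_
  have hkmin := mem_range.mp hk
  rw [laguerreL_eq_eval_egf_fwdDiff (r := n) (by omega),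
    laguerreL_eq_eval_egf_fwdDiff (r := m) (μ := ν + n) (by omega)]
  ring
end

section
/- Let β > 0, 0 < c < 1, and m, n ∈ ℕ. Then for all x ∈ ℝ, M_{m+n}(x; β, c) = Σ_{k=0}^{min(n,m)} ((−n)_k (−m)_k (β+x)_k / (k! (β)_k (β+n)_k)) · ((c−1)/c)^k · M_{n−k}(x; β+k, c) · M_{m−k}(x−n; β+n+k, c). -/
open Finset

/-- Meixner polynomial `M_n(x; β, c)`. -/
noncomputable def meixnerM (n : ℕ) (x β c : ℝ) : ℝ :=
  ∑ k ∈ Finset.range (n + 1),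
    poch (-(n : ℝ)) k * poch (-x) k / (poch β k * (k.factorial : ℝ)) * ((c - 1) / c) ^ k

/-!
Chu–Vandermonde splits `(-m-n)_s = Σ_i C(s,i) (-n)_i (-m)_{s-i}`, which writes `M_{m+n}` as a double
sum over `i ≤ n`, `q ≤ m` whose terms carry `(-x)_{i+q} = (-x)_i (i-x)_q`. The Pfaff–Saalschütz
identity expands `(i-x)_q (β+n)_q` as a sum over `k ≤ q`; after substituting `q = k + j` and
exchanging the order of summation, the inner double sum over `i, j` is, for each `k`, the product of
`M_{n-k}(x; β+k, c)` and `M_{m-k}(x-n; β+n+k, c)`.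
-/

open Polynomial

lemma poch_add (a : ℝ) (p q : ℕ) : poch a (p + q) = poch a p * poch (a + p) q := by
  simp only [poch, prod_range_add, Nat.cast_add, add_assoc]

lemma poch_mul_poch_sub (a : ℝ) {k q : ℕ} (h : k ≤ q) :
    poch a k * poch (a + k) (q - k) = poch a q := by
  rw [← poch_add, Nat.add_sub_cancel' h]

lemma poch_pos {a : ℝ} (ha : 0 < a) (n : ℕ) : 0 < poch a n :=
  prod_pos fun _ _ => by positivity

lemma poch_eq_eval_ascPochhammer (a : ℝ) (n : ℕ) : poch a n = (ascPochhammer ℝ n).eval a := by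
  induction n with
  | zero => simp [poch]
  | succ n ih => rw [poch, prod_range_succ, ← poch, ih, ascPochhammer_succ_eval]

lemma poch_neg_natCast_of_lt {N k : ℕ} (h : N < k) : poch (-(N : ℝ)) k = 0 := by
  rw [poch_eq_eval_ascPochhammer, ascPochhammer_eval_neg_coe_nat_of_lt h]

lemma descPochhammer_smeval_eq_eval (r : ℝ) (n : ℕ) :
    (descPochhammer ℤ n).smeval r = (descPochhammer ℝ n).eval r := by
  rw [← aeval_eq_smeval, ← eval_map_algebraMap, descPochhammer_map]

lemma descPochhammer_smeval_neg (a : ℝ) (n : ℕ) :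
    (descPochhammer ℤ n).smeval (-a) = (-1) ^ n * poch a n := by
  rw [poch_eq_eval_ascPochhammer, ← neg_neg a, ascPochhammer_eval_neg_eq_descPochhammer,
    descPochhammer_smeval_eq_eval, neg_neg, ← mul_assoc, ← mul_pow]
  simp

lemma descPochhammer_smeval_add_sub_one (a : ℝ) (n : ℕ) :
    (descPochhammer ℤ n).smeval (a + n - 1) = poch a n := by
  rw [descPochhammer_smeval_eq_eval, descPochhammer_eval_eq_ascPochhammer,
    poch_eq_eval_ascPochhammer]
  ring_nf

lemma poch_add_eq_sum (u v : ℝ) (s : ℕ) :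
    poch (u + v) s = ∑ i ∈ range (s + 1), (s.choose i : ℝ) * poch u i * poch v (s - i) := by
  have h := Ring.descPochhammer_smeval_add (r := -u) (s := -v) s (Commute.all _ _)
  rw [← neg_add, descPochhammer_smeval_neg, Nat.sum_antidiagonal_eq_sum_range_succ (fun i j =>
    (s.choose i : ℝ) * ((descPochhammer ℤ i).smeval (-u) * (descPochhammer ℤ j).smeval (-v)))] at h
  simp only [descPochhammer_smeval_neg] at h
  refine mul_right_injective₀ (pow_ne_zero s (by norm_num : (-1 : ℝ) ≠ 0)) (h.trans ?_)
  dsimp only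
  rw [mul_sum]
  refine sum_congr rfl fun i hi => ?_
  rw [← Nat.add_sub_cancel' (Nat.lt_succ_iff.1 (mem_range.1 hi)), pow_add, Nat.add_sub_cancel_left]
  ring

-- Chu–Vandermonde for falling factorials at `-u` and `c + q - 1`, rewritten with rising ones.
lemma poch_sub_eq_sum (c u : ℝ) (q : ℕ) :
    poch (c - u) q = ∑ k ∈ range (q + 1),
      (-1) ^ k * (q.choose k : ℝ) * poch u k * poch (c + k) (q - k) := by
  rw [← descPochhammer_smeval_add_sub_one, show c - u + q - 1 = -u + (c + q - 1) by ring,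
    Ring.descPochhammer_smeval_add _ (Commute.all _ _), Nat.sum_antidiagonal_eq_sum_range_succ
    (fun k l => (q.choose k : ℝ) *
      ((descPochhammer ℤ k).smeval (-u) * (descPochhammer ℤ l).smeval (c + q - 1)))]
  refine sum_congr rfl fun k hk => ?_
  have hkq : k ≤ q := Nat.lt_succ_iff.1 (mem_range.1 hk)
  rw [descPochhammer_smeval_neg, show c + q - 1 = c + k + ↑(q - k) - 1 by push_cast [hkq]; ring,
    descPochhammer_smeval_add_sub_one]
  ring

-- The terminating Pfaff–Saalschütz sum, multiplied through by its denominators.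
lemma poch_saalschutz (a b c : ℝ) (q : ℕ) :
    ∑ k ∈ range (q + 1), (q.choose k : ℝ) * poch a k * poch b k * poch (c - a - b) (q - k) *
        poch (c + k) (q - k) = poch (c - a) q * poch (c - b) q := by
  set F : ℕ → ℕ → ℝ := fun i t => (-1) ^ i * q.choose i * poch a i * poch (c - b) i *
    poch (c + i) (q - i) * ((q - i).choose t * poch (a + i) t * poch (c - a - b) (q - i - t))
  have expand_b : ∀ k ∈ range (q + 1), (q.choose k : ℝ) * poch a k * poch b k *
      poch (c - a - b) (q - k) * poch (c + k) (q - k) = ∑ i ∈ range (k + 1), F i (k - i) := by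
    intro k hk
    have hkq : k ≤ q := Nat.lt_succ_iff.1 (mem_range.1 hk)
    have hb := poch_sub_eq_sum c (c - b) k
    rw [sub_sub_cancel] at hb
    rw [hb, mul_sum, sum_mul, sum_mul]
    refine sum_congr rfl fun i hi => ?_
    have hik : i ≤ k := Nat.lt_succ_iff.1 (mem_range.1 hi)
    have hchoose : (q.choose k : ℝ) * k.choose i = q.choose i * (q - i).choose (k - i) := by
      exact_mod_cast Nat.choose_mul hik
    have hc : poch (c + i) (q - i) = poch (c + i) (k - i) * poch (c + k) (q - k) := by
      rw [← poch_mul_poch_sub (c + i) (Nat.sub_le_sub_right hkq i),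
        Nat.sub_sub_sub_cancel_right hik]
      push_cast [hik]
      ring_nf
    simp only [F, hc, ← poch_mul_poch_sub a hik, Nat.sub_sub_sub_cancel_right hik]
    linear_combination (-1) ^ i * poch a i * poch (a + i) (k - i) * poch (c - b) i *
      poch (c + i) (k - i) * poch (c + k) (q - k) * poch (c - a - b) (q - k) * hchoose
  have inner_vandermonde : ∀ i ∈ range (q + 1), ∑ t ∈ range (q + 1 - i), F i t =
      poch (c - b) q * ((-1) ^ i * q.choose i * poch a i * poch (c + i) (q - i)) := by
    intro i hi
    have hiq : i ≤ q := Nat.lt_succ_iff.1 (mem_range.1 hi)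
    rw [← mul_sum, Nat.sub_add_comm hiq, ← poch_add_eq_sum, ← poch_mul_poch_sub (c - b) hiq,
      show a + i + (c - a - b) = c - b + i by ring]
    ring
  rw [sum_congr rfl expand_b, sum_range_diag_flip, sum_congr rfl inner_vandermonde, ← mul_sum,
    ← poch_sub_eq_sum, mul_comm]

lemma sum_range_eq_of_eq_zero {M : Type*} [AddCommMonoid M] {f : ℕ → M} {a b : ℕ} (hab : a ≤ b)
    (hf : ∀ i, a ≤ i → i < b → f i = 0) : ∑ i ∈ range a, f i = ∑ i ∈ range b, f i :=
  sum_subset (range_subset_range.2 hab) fun i hb ha => hf i (by simpa using ha) (by simpa using hb)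

lemma sum_range_diag_eq_sum_range_sum_range {M : Type*} [AddCommMonoid M] (f : ℕ → ℕ → M)
    {n m : ℕ} (hn : ∀ i j, n < i → f i j = 0) (hm : ∀ i j, m < j → f i j = 0) :
    ∑ s ∈ range (n + m + 1), ∑ i ∈ range (s + 1), f i (s - i) =
      ∑ i ∈ range (n + 1), ∑ j ∈ range (m + 1), f i j := by
  rw [sum_range_diag_flip, ← sum_range_eq_of_eq_zero (by omega)
    fun i hi _ => sum_eq_zero fun j _ => hn i j hi]
  exact sum_congr rfl fun i hi => (sum_range_eq_of_eq_zero (by simp at hi; omega)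
    fun j hj _ => hm i j hj).symm

lemma meixnerM_add_eq_sum (m n : ℕ) (x β c : ℝ) :
    meixnerM (m + n) x β c = ∑ i ∈ range (n + 1), ∑ q ∈ range (m + 1),
      poch (-(n : ℝ)) i * poch (-(m : ℝ)) q * poch (-x) (i + q) /
        (poch β (i + q) * i.factorial * q.factorial) * ((c - 1) / c) ^ (i + q) := by
  rw [meixnerM, add_comm m n, ← sum_range_diag_eq_sum_range_sum_range _
    (fun i q h => by simp [poch_neg_natCast_of_lt h])
    (fun i q h => by simp [poch_neg_natCast_of_lt h])]
  refine sum_congr rfl fun s _ => ?_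
  rw [Nat.cast_add, neg_add, poch_add_eq_sum, sum_mul, sum_div, sum_mul]
  refine sum_congr rfl fun i hi => ?_
  have his : i ≤ s := Nat.lt_succ_iff.1 (mem_range.1 hi)
  rw [Nat.add_sub_cancel' his, ← Nat.choose_mul_factorial_mul_factorial his]
  have : (s.choose i : ℝ) ≠ 0 := Nat.cast_ne_zero.2 (Nat.choose_pos his).ne'
  push_cast
  field_simp

open Nat in
/-- The `(k, i, j)` term of the right-hand side once both Meixner polynomials are expanded. -/
noncomputable def burchnallTerm (n m : ℕ) (x β z : ℝ) (k i j : ℕ) : ℝ :=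
  poch (-n) (k + i) * poch (-m) (k + j) * poch (-x) i * poch (β + x) k * poch (n - x) j /
    (k ! * i ! * j ! * poch β (k + i) * poch (β + n) (k + j)) * z ^ (k + i + j)

section BurchnallTerm

variable {n m : ℕ} {x β : ℝ} (z : ℝ)

lemma burchnallTerm_eq_zero_of_lt {k i : ℕ} (h : n < k + i) (j : ℕ) :
    burchnallTerm n m x β z k i j = 0 := by
  simp [burchnallTerm, poch_neg_natCast_of_lt h]

lemma sum_burchnallTerm_eq (hβ : 0 < β) (i q : ℕ) :
    ∑ k ∈ range (q + 1), burchnallTerm n m x β z k i (q - k) =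
      poch (-(n : ℝ)) i * poch (-(m : ℝ)) q * poch (-x) (i + q) /
        (poch β (i + q) * i.factorial * q.factorial) * z ^ (i + q) := by
  have hs := poch_saalschutz (β + x) (i - n) (β + i) q
  rw [show β + i - (β + x) - (i - n) = n - x by ring, show β + i - (β + x) = i - x by ring,
    show β + i - (i - n) = β + n by ring] at hs
  have hβn : poch (β + n) q ≠ 0 := (poch_pos (by positivity) q).ne'
  rw [poch_add (-x) i q, show -x + i = i - x by ring,
    ← mul_div_cancel_right₀ (poch (i - x) q) hβn, ← hs, sum_div, mul_sum, mul_sum, sum_div,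
    sum_mul]
  refine sum_congr rfl fun k hk => ?_
  have hkq : k ≤ q := Nat.lt_succ_iff.1 (mem_range.1 hk)
  have hn : poch (-(n : ℝ)) (k + i) = poch (-(n : ℝ)) i * poch (i - n) k := by
    rw [add_comm, poch_add, neg_add_eq_sub]
  have hβq : poch β (i + q) = poch β (k + i) * poch (β + i + k) (q - k) := by
    rw [show i + q = k + i + (q - k) by omega, poch_add]
    push_cast
    ring_nf
  have hfac : (q.factorial : ℝ) = q.choose k * k.factorial * (q - k).factorial := by
    exact_mod_cast (Nat.choose_mul_factorial_mul_factorial hkq).symm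
  have := (poch_pos hβ (k + i)).ne'
  have := (poch_pos (by positivity : 0 < β + i + k) (q - k)).ne'
  have : (q.choose k : ℝ) ≠ 0 := Nat.cast_ne_zero.2 (Nat.choose_pos hkq).ne'
  rw [burchnallTerm, hn, hβq, hfac, Nat.add_sub_cancel' hkq, show k + i + (q - k) = i + q by omega]
  field_simp

lemma burchnallTerm_eq_mul (hβ : 0 < β) (k i j : ℕ) :
    burchnallTerm n m x β z k i j =
      poch (-(n : ℝ)) k * poch (-(m : ℝ)) k * poch (β + x) k /
          (k.factorial * poch β k * poch (β + n) k) * z ^ k *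
        ((poch (k - n) i * poch (-x) i / (poch (β + k) i * i.factorial) * z ^ i) *
          (poch (k - m) j * poch (n - x) j / (poch (β + n + k) j * j.factorial) * z ^ j)) := by
  have := (poch_pos hβ k).ne'
  have := (poch_pos (by positivity : 0 < β + k) i).ne'
  have := (poch_pos (by positivity : 0 < β + n) k).ne'
  have := (poch_pos (by positivity : 0 < β + n + k) j).ne'
  rw [burchnallTerm, poch_add, poch_add, poch_add, poch_add, neg_add_eq_sub, neg_add_eq_sub]
  field_simp
  ring

lemma meixnerM_add_eq_sum_burchnallTerm (hβ : 0 < β) (c : ℝ) :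
    meixnerM (m + n) x β c = ∑ k ∈ range (m + 1), ∑ i ∈ range (n + 1),
      ∑ j ∈ range (m + 1 - k), burchnallTerm n m x β ((c - 1) / c) k i j := by
  simp_rw [meixnerM_add_eq_sum, ← sum_burchnallTerm_eq _ hβ, sum_range_diag_flip]
  exact sum_comm

lemma sum_burchnallTerm_truncate :
    ∑ k ∈ range (m + 1), ∑ i ∈ range (n + 1), ∑ j ∈ range (m + 1 - k),
        burchnallTerm n m x β z k i j =
      ∑ k ∈ range (min n m + 1), ∑ i ∈ range (n - k + 1), ∑ j ∈ range (m - k + 1),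
        burchnallTerm n m x β z k i j := by
  rw [← sum_range_eq_of_eq_zero (a := min n m + 1) (by omega) fun k hk hkm => sum_eq_zero
    fun i _ => sum_eq_zero fun j _ => burchnallTerm_eq_zero_of_lt z (by omega) j]
  refine sum_congr rfl fun k hk => ?_
  rw [mem_range] at hk
  rw [Nat.sub_add_comm (by omega : k ≤ m)]
  exact (sum_range_eq_of_eq_zero (by omega) fun i hi _ => sum_eq_zero
    fun j _ => burchnallTerm_eq_zero_of_lt z (by omega) j).symm

lemma meixnerM_mul_meixnerM_eq_sum (hβ : 0 < β) {k : ℕ} (hkn : k ≤ n) (hkm : k ≤ m) (c : ℝ) :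
    poch (-(n : ℝ)) k * poch (-(m : ℝ)) k * poch (β + x) k /
          ((k.factorial : ℝ) * poch β k * poch (β + n) k) * ((c - 1) / c) ^ k *
        meixnerM (n - k) x (β + k) c * meixnerM (m - k) (x - n) (β + n + k) c =
      ∑ i ∈ range (n - k + 1), ∑ j ∈ range (m - k + 1),
        burchnallTerm n m x β ((c - 1) / c) k i j := by
  simp only [meixnerM, burchnallTerm_eq_mul _ hβ]
  rw [Nat.cast_sub hkn, Nat.cast_sub hkm, neg_sub, neg_sub, neg_sub, mul_assoc, sum_mul_sum,
    mul_sum]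
  exact sum_congr rfl fun i _ => by rw [mul_sum]

end BurchnallTerm

theorem burchnall_meixner_expansion_first_general (β c : ℝ) (hβ : 0 < β)
    (m n : ℕ) (x : ℝ) :
    meixnerM (m + n) x β c =
      ∑ k ∈ Finset.range (min n m + 1),
        poch (-(n : ℝ)) k * poch (-(m : ℝ)) k * poch (β + x) k /
            ((k.factorial : ℝ) * poch β k * poch (β + n) k) * ((c - 1) / c) ^ k *
          meixnerM (n - k) x (β + k) c * meixnerM (m - k) (x - n) (β + n + k) c := by
  rw [meixnerM_add_eq_sum_burchnallTerm hβ, sum_burchnallTerm_truncate]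
  refine sum_congr rfl fun k hk => ?_
  rw [mem_range, Nat.lt_succ_iff, le_min_iff] at hk
  exact (meixnerM_mul_meixnerM_eq_sum hβ hk.1 hk.2 c).symm

theorem burchnall_meixner_expansion_first (β c : ℝ) (hβ : 0 < β) (hc0 : 0 < c) (hc1 : c < 1)
    (m n : ℕ) (x : ℝ) :
    meixnerM (m + n) x β c =
      ∑ k ∈ Finset.range (min n m + 1),
        poch (-(n : ℝ)) k * poch (-(m : ℝ)) k * poch (β + x) k /
            ((k.factorial : ℝ) * poch β k * poch (β + n) k) * ((c - 1) / c) ^ k *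
          meixnerM (n - k) x (β + k) c * meixnerM (m - k) (x - n) (β + n + k) c :=
  burchnall_meixner_expansion_first_general β c hβ m n x
end

section
/- In each of the following six cases the given functions satisfy the Toda lattice equations on the indicated t-interval: (i) Hermite: b_n(t) = −t/2, c_n(t) = n/2, for t ∈ ℝ; (ii) Laguerre: for α > −1, b_n(t) = (2n+α+1)/(1+t), c_n(t) = n(n+α)/(1+t)², for t > −1; (iii) Charlier: for a > 0, b_n(t) = n + a·e^{−t}, c_n(t) = n·a·e^{−t}, for t ∈ ℝ; (iv) Meixner: for β > 0 and 0 < c < 1, b_n(t) = (n(c·e^{−t}+1) + β·c·e^{−t})/(1 − c·e^{−t}), c_n(t) = n(n+β−1)·c·e^{−t}/(1 − c·e^{−t})², for t > ln(c); (v) Meixner–Pollaczek: for λ > 0 and 0 < φ < π, b_n(t) = −(n+λ)·cos(φ − t/2)/sin(φ − t/2), c_n(t) = n(n+2λ−1)/(4 sin²(φ − t/2)), for 2φ−2π < t < 2φ; (vi) Krawtchouk: for N ∈ ℕ and 0 < p < 1, b_n(t) = (p·e^{−t}(N−n) + n(1−p))/(1 + p(e^{−t}−1)), c_n(t) = n(N+1−n)·e^{−t}·p(1−p)/(1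 + p(e^{−t}−1))², for t ∈ ℝ and n ∈ {0,…,N}, where in this case the equations are imposed for 0 ≤ n ≤ N (the same formula gives c_{N+1} ≡ 0). -/
open Real

/-- The Toda lattice equations on a set `s ⊆ ℝ` for `b_n` (n ≥ 0) and `c_n` (n ≥ 1), with the
convention `c_0 = 0`: `ċ_n = c_n (b_{n-1} - b_n)` for `n ≥ 1` and `ḃ_n = c_n - c_{n+1}`. -/
def IsTodaSolution (b c : ℕ → ℝ → ℝ) (s : Set ℝ) : Prop :=
  (∀ t ∈ s, c 0 t = 0) ∧
  (∀ n : ℕ, 1 ≤ n → ∀ t ∈ s, HasDerivAt (c n) (c n t * (b (n - 1) t - b n t)) t) ∧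
  (∀ n : ℕ, ∀ t ∈ s, HasDerivAt (b n) (c n t - c (n + 1) t) t)

/-- The Toda lattice equations imposed only for indices `0 ≤ n ≤ N`. -/
def IsTodaSolutionUpTo (N : ℕ) (b c : ℕ → ℝ → ℝ) (s : Set ℝ) : Prop :=
  (∀ t ∈ s, c 0 t = 0) ∧
  (∀ n : ℕ, 1 ≤ n → n ≤ N → ∀ t ∈ s, HasDerivAt (c n) (c n t * (b (n - 1) t - b n t)) t) ∧
  (∀ n : ℕ, n ≤ N → ∀ t ∈ s, HasDerivAt (b n) (c n t - c (n + 1) t) t)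

/-! For b_n = β + n δ and c_n = n (κ + n μ) with β, δ, κ, μ functions of t alone, comparing
coefficients of powers of n reduces the whole Toda lattice to the four ODEs
β' = -(κ + μ), δ' = -2μ, κ' = -δκ, μ' = -δμ. All six families have this shape, and the ODEs are
checked by direct differentiation. The Krawtchouk family is the Meixner family with β = -N and
c = p / (p - 1), where c < 0 keeps the denominator 1 - c e^{-t} positive for all t. -/

theorem isTodaSolution_affine_quadratic {β δ κ μ : ℝ → ℝ} {s : Set ℝ}
    (hβ : ∀ t ∈ s, HasDerivAt β (-(κ t + μ t)) t)
    (hδ : ∀ t ∈ s, HasDerivAt δ (-2 * μ t) t)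
    (hκ : ∀ t ∈ s, HasDerivAt κ (-(δ t * κ t)) t)
    (hμ : ∀ t ∈ s, HasDerivAt μ (-(δ t * μ t)) t) :
    IsTodaSolution (fun n t => β t + n * δ t) (fun n t => n * (κ t + n * μ t)) s := by
  refine ⟨fun t _ => by simp, fun n hn t ht => ?_, fun n t ht => ?_⟩
  · refine (((hκ t ht).add ((hμ t ht).const_mul (n : ℝ))).const_mul (n : ℝ)).congr_deriv ?_
    dsimp only
    rw [Nat.cast_sub hn]
    ring
  · refine ((hβ t ht).add ((hδ t ht).const_mul (n : ℝ))).congr_deriv ?_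
    push_cast
    ring

theorem IsTodaSolution.isTodaSolutionUpTo {b c : ℕ → ℝ → ℝ} {s : Set ℝ}
    (h : IsTodaSolution b c s) (N : ℕ) : IsTodaSolutionUpTo N b c s :=
  ⟨h.1, fun n hn _ => h.2.1 n hn, fun n _ => h.2.2 n⟩

theorem isTodaSolution_hermite :
    IsTodaSolution (fun _ t => -t / 2) (fun n _ => (n : ℝ) / 2) Set.univ := by
  convert isTodaSolution_affine_quadratic (β := fun t => -t / 2) (δ := fun _ => 0)
    (κ := fun _ => 1 / 2) (μ := fun _ => 0)
    (fun t _ => ((hasDerivAt_id' t).neg.div_const 2).congr_deriv (by ring))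
    (fun t _ => (hasDerivAt_const t 0).congr_deriv (by ring))
    (fun t _ => (hasDerivAt_const t _).congr_deriv (by ring))
    (fun t _ => (hasDerivAt_const t 0).congr_deriv (by ring)) using 1
  · ext n t; ring
  · ext n t; ring

theorem hasDerivAt_one_add_inv {t : ℝ} (ht : 1 + t ≠ 0) :
    HasDerivAt (fun t : ℝ => (1 + t)⁻¹) (-((1 + t)⁻¹) ^ 2) t :=
  (((hasDerivAt_id' t).const_add 1).inv ht).congr_deriv (by rw [inv_pow, neg_div, one_div])

theorem isTodaSolution_laguerre (α : ℝ) :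
    IsTodaSolution (fun n t => (2 * n + α + 1) / (1 + t))
      (fun n t => (n : ℝ) * (n + α) / (1 + t) ^ 2) (Set.Ioi (-1)) := by
  set u : ℝ → ℝ := fun t => (1 + t)⁻¹
  have hu : ∀ t ∈ Set.Ioi (-1 : ℝ), HasDerivAt u (-u t ^ 2) t := fun t ht =>
    hasDerivAt_one_add_inv (by linarith [Set.mem_Ioi.mp ht])
  convert isTodaSolution_affine_quadratic (β := fun t => (α + 1) * u t) (δ := fun t => 2 * u t)
    (κ := fun t => α * u t ^ 2) (μ := fun t => u t ^ 2)
    (fun t ht => ((hu t ht).const_mul _).congr_deriv (by ring))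
    (fun t ht => ((hu t ht).const_mul _).congr_deriv (by ring))
    (fun t ht => (((hu t ht).pow 2).const_mul _).congr_deriv (by ring))
    (fun t ht => ((hu t ht).pow 2).congr_deriv (by ring)) using 1
  · ext n t; simp only [u]; ring
  · ext n t; simp only [u, inv_pow]; ring

theorem isTodaSolution_charlier (a : ℝ) :
    IsTodaSolution (fun n t => (n : ℝ) + a * exp (-t)) (fun n t => (n : ℝ) * a * exp (-t))
      Set.univ := by
  have hx : ∀ t : ℝ, HasDerivAt (fun t => a * exp (-t)) (-(a * exp (-t))) t := fun t =>
    ((hasDerivAt_neg t).exp.const_mul a).congr_deriv (by ring)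
  convert isTodaSolution_affine_quadratic (β := fun t => a * exp (-t)) (δ := fun _ => 1)
    (κ := fun t => a * exp (-t)) (μ := fun _ => 0)
    (fun t _ => (hx t).congr_deriv (by ring))
    (fun t _ => (hasDerivAt_const t 1).congr_deriv (by ring))
    (fun t _ => (hx t).congr_deriv (by ring))
    (fun t _ => (hasDerivAt_const t 0).congr_deriv (by ring)) using 1
  · ext n t; ring
  · ext n t; ring

theorem isTodaSolution_meixner_of_ne_one (β c : ℝ) {s : Set ℝ} (hs : ∀ t ∈ s, c * exp (-t) ≠ 1) :
    IsTodaSolution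
      (fun n t => ((n : ℝ) * (c * exp (-t) + 1) + β * c * exp (-t)) / (1 - c * exp (-t)))
      (fun n t => (n : ℝ) * ((n : ℝ) + β - 1) * c * exp (-t) / (1 - c * exp (-t)) ^ 2) s := by
  set x : ℝ → ℝ := fun t => c * exp (-t)
  have hx (t : ℝ) : HasDerivAt x (-x t) t :=
    ((hasDerivAt_neg t).exp.const_mul c).congr_deriv (by ring)
  have hD (t : ℝ) : HasDerivAt (fun t => 1 - x t) (x t) t :=
    ((hx t).const_sub 1).congr_deriv (by ring)
  have hne : ∀ t ∈ s, 1 - x t ≠ 0 := fun t ht => sub_ne_zero.mpr (hs t ht).symm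
  have hμ : ∀ t ∈ s, HasDerivAt (fun t => x t / (1 - x t) ^ 2)
      (-((1 + x t) / (1 - x t) * (x t / (1 - x t) ^ 2))) t := fun t ht =>
    ((hx t).div ((hD t).pow 2) (pow_ne_zero 2 (hne t ht))).congr_deriv
      (by simp only [Pi.pow_apply]; field_simp [hne t ht]; ring)
  convert isTodaSolution_affine_quadratic (β := fun t => β * x t / (1 - x t))
    (δ := fun t => (1 + x t) / (1 - x t)) (κ := fun t => (β - 1) * (x t / (1 - x t) ^ 2))
    (μ := fun t => x t / (1 - x t) ^ 2)
    (fun t ht => (((hx t).const_mul β).div (hD t) (hne t ht)).congr_deriv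
      (by field_simp [hne t ht]; ring))
    (fun t ht => (((hx t).const_add 1).div (hD t) (hne t ht)).congr_deriv
      (by field_simp [hne t ht]; ring))
    (fun t ht => ((hμ t ht).const_mul (β - 1)).congr_deriv (by ring)) hμ using 1
  · ext n t; simp only [x]; ring
  · ext n t; simp only [x]; ring

theorem isTodaSolution_meixner (β : ℝ) {c : ℝ} (hc : 0 < c) :
    IsTodaSolution
      (fun n t => ((n : ℝ) * (c * exp (-t) + 1) + β * c * exp (-t)) / (1 - c * exp (-t)))
      (fun n t => (n : ℝ) * ((n : ℝ) + β - 1) * c * exp (-t) / (1 - c * exp (-t)) ^ 2)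
      (Set.Ioi (log c)) := by
  refine isTodaSolution_meixner_of_ne_one β c fun t ht => ne_of_lt ?_
  calc c * exp (-t) < c * exp (-log c) := by gcongr; exact ht
    _ = 1 := by rw [exp_neg, exp_log hc, mul_inv_cancel₀ hc.ne']

theorem isTodaSolution_krawtchouk (N : ℕ) {p : ℝ} (hp : 0 < p) (hp1 : p < 1) :
    IsTodaSolution
      (fun n t => (p * exp (-t) * ((N : ℝ) - n) + (n : ℝ) * (1 - p)) / (1 + p * (exp (-t) - 1)))
      (fun n t => (n : ℝ) * ((N : ℝ) + 1 - n) * exp (-t) * p * (1 - p) /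
        (1 + p * (exp (-t) - 1)) ^ 2)
      Set.univ := by
  have hp₁ : p - 1 ≠ 0 := sub_ne_zero.mpr hp1.ne
  have hp₂ : 1 - p ≠ 0 := sub_ne_zero.mpr hp1.ne'
  have hD (t : ℝ) : 0 < 1 + p * (exp (-t) - 1) := by nlinarith [exp_pos (-t)]
  have hx (t : ℝ) : p / (p - 1) * exp (-t) < 0 :=
    mul_neg_of_neg_of_pos (div_neg_of_pos_of_neg hp (by linarith)) (exp_pos _)
  have hden (t : ℝ) : 1 - p / (p - 1) * exp (-t) = (1 + p * (exp (-t) - 1)) / (1 - p) := by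
    field_simp
    ring
  convert isTodaSolution_meixner_of_ne_one (-N) (p / (p - 1)) (s := Set.univ)
    (fun t _ => ((hx t).trans one_pos).ne) using 1 <;> ext n t <;> rw [hden] <;>
    field_simp [(hD t).ne'] <;> ring

theorem isTodaSolution_meixnerPollaczek (lam φ : ℝ) :
    IsTodaSolution
      (fun n t => -((n : ℝ) + lam) * cos (φ - t / 2) / sin (φ - t / 2))
      (fun n t => (n : ℝ) * ((n : ℝ) + 2 * lam - 1) / (4 * sin (φ - t / 2) ^ 2))
      (Set.Ioo (2 * φ - 2 * π) (2 * φ)) := by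
  set θ : ℝ → ℝ := fun t => φ - t / 2
  have hθ (t : ℝ) : HasDerivAt θ (-1 / 2) t :=
    ((hasDerivAt_id' t).div_const 2).const_sub φ |>.congr_deriv (by ring)
  have hsin : ∀ t ∈ Set.Ioo (2 * φ - 2 * π) (2 * φ), sin (θ t) ≠ 0 := fun t ⟨h₁, h₂⟩ =>
    (sin_pos_of_pos_of_lt_pi (by simp only [θ]; linarith) (by simp only [θ]; linarith)).ne'
  have hδ : ∀ t ∈ Set.Ioo (2 * φ - 2 * π) (2 * φ), HasDerivAt (fun t => -(cos (θ t) / sin (θ t)))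
      (-2 * (4 * sin (θ t) ^ 2)⁻¹) t := fun t ht =>
    (((hθ t).cos.div (hθ t).sin (hsin t ht)).neg).congr_deriv (by
      field_simp [hsin t ht]
      linear_combination -4 * sin_sq_add_cos_sq (θ t))
  have hμ : ∀ t ∈ Set.Ioo (2 * φ - 2 * π) (2 * φ), HasDerivAt (fun t => (4 * sin (θ t) ^ 2)⁻¹)
      (-(-(cos (θ t) / sin (θ t)) * (4 * sin (θ t) ^ 2)⁻¹)) t := fun t ht =>
    ((((hθ t).sin.pow 2).const_mul 4).inv (by simp [hsin t ht])).congr_deriv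
      (by simp only [Pi.pow_apply]; field_simp [hsin t ht]; ring)
  convert isTodaSolution_affine_quadratic (β := fun t => lam * -(cos (θ t) / sin (θ t)))
    (δ := fun t => -(cos (θ t) / sin (θ t))) (κ := fun t => (2 * lam - 1) * (4 * sin (θ t) ^ 2)⁻¹)
    (μ := fun t => (4 * sin (θ t) ^ 2)⁻¹)
    (fun t ht => ((hδ t ht).const_mul lam).congr_deriv (by ring)) hδ
    (fun t ht => ((hμ t ht).const_mul (2 * lam - 1)).congr_deriv (by ring)) hμ using 1
  · ext n t; simp only [θ]; ring
  · ext n t; simp only [θ]; ring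

theorem explicit_toda_solutions :
    -- (i) Hermite
    (IsTodaSolution (fun _ t => -t / 2) (fun n _ => (n : ℝ) / 2) Set.univ) ∧
    -- (ii) Laguerre
    (∀ α : ℝ, -1 < α →
      IsTodaSolution (fun n t => (2 * n + α + 1) / (1 + t))
        (fun n t => (n : ℝ) * (n + α) / (1 + t) ^ 2) (Set.Ioi (-1))) ∧
    -- (iii) Charlier
    (∀ a : ℝ, 0 < a →
      IsTodaSolution (fun n t => (n : ℝ) + a * exp (-t))
        (fun n t => (n : ℝ) * a * exp (-t)) Set.univ) ∧
    -- (iv) Meixner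
    (∀ β c : ℝ, 0 < β → 0 < c → c < 1 →
      IsTodaSolution
        (fun n t => ((n : ℝ) * (c * exp (-t) + 1) + β * c * exp (-t)) / (1 - c * exp (-t)))
        (fun n t => (n : ℝ) * ((n : ℝ) + β - 1) * c * exp (-t) / (1 - c * exp (-t)) ^ 2)
        (Set.Ioi (Real.log c))) ∧
    -- (v) Meixner–Pollaczek
    (∀ lam φ : ℝ, 0 < lam → 0 < φ → φ < π →
      IsTodaSolution
        (fun n t => -((n : ℝ) + lam) * cos (φ - t / 2) / sin (φ - t / 2))
        (fun n t => (n : ℝ) * ((n : ℝ) + 2 * lam - 1) / (4 * sin (φ - t / 2) ^ 2))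
        (Set.Ioo (2 * φ - 2 * π) (2 * φ))) ∧
    -- (vi) Krawtchouk
    (∀ (N : ℕ) (p : ℝ), 0 < p → p < 1 →
      IsTodaSolutionUpTo N
        (fun n t => (p * exp (-t) * ((N : ℝ) - n) + (n : ℝ) * (1 - p)) / (1 + p * (exp (-t) - 1)))
        (fun n t => (n : ℝ) * ((N : ℝ) + 1 - n) * exp (-t) * p * (1 - p) /
          (1 + p * (exp (-t) - 1)) ^ 2)
        Set.univ ∧
      (∀ t : ℝ, ((N + 1 : ℕ) : ℝ) * ((N : ℝ) + 1 - (N + 1 : ℕ)) * exp (-t) * p * (1 - p) /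
          (1 + p * (exp (-t) - 1)) ^ 2 = 0)) :=
  ⟨isTodaSolution_hermite,
    fun α _ => isTodaSolution_laguerre α,
    fun a _ => isTodaSolution_charlier a,
    fun β _ _ hc _ => isTodaSolution_meixner β hc,
    fun lam φ _ _ _ => isTodaSolution_meixnerPollaczek lam φ,
    fun N _ hp hp1 => ⟨(isTodaSolution_krawtchouk N hp hp1).isTodaSolutionUpTo N,
      fun _ => by push_cast; ring⟩⟩
end
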